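/- Let Θ₀ < λ ≤ 1 and suppose the map (z,φ) ↦ F_{z,λ}(φ) on ℝ × B¹(ℝ⁺) attains its global minimum at (ζ, f) with f nonnegative. Then (λ − Θ₀)/‖u₁‖₄² ≤ λ‖f‖₄² ≤ (3/2)·ζ^{1/2}·(λ − μ₁(ζ)), where ‖·‖₄ denotes the L⁴((0,∞)) norm. -/

import Mathlib

/-!
Scaling `f ↦ √s f` at a minimizer shows that the quadratic part of the energy equals
`λ(‖f‖₂² - ‖f‖₄⁴)`, so the minimal energy is `-(λ/2)‖f‖₄⁴`. Comparing it with the energy of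
`√s u₁` at `z = ξ₀` and optimizing in `s` gives the lower bound.

Stationarity in `z` gives `∫ t f² = ζ ∫ f²`, hence
`2ζ‖f‖₂² = ∫ (3ζ - t) f² ≤ ‖(3ζ - t)₊‖₂ ‖f‖₄² = 3ζ^{3/2} ‖f‖₄²` by Cauchy–Schwarz. Together with
`μ₁(ζ)‖f‖₂² ≤ λ(‖f‖₂² - ‖f‖₄⁴)` this gives the upper bound.
-/

open MeasureTheory Set Real Filter

noncomputable section

/-- Membership in the space `B¹(ℝ⁺)`: square integrable on `(0,∞)`, with square
integrable derivative and such that `t ↦ t·φ(t)` is square integrable. -/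
def MemB1 (φ : ℝ → ℝ) : Prop :=
  ContinuousWithinAt φ (Ici 0) 0 ∧
  (∀ t ∈ Ioi (0:ℝ), DifferentiableAt ℝ φ t) ∧
  IntegrableOn (fun t => (φ t) ^ 2) (Ioi 0) ∧
  IntegrableOn (fun t => (deriv φ t) ^ 2) (Ioi 0) ∧
  IntegrableOn (fun t => (t * φ t) ^ 2) (Ioi 0)

/-- The Rayleigh quotient of the de Gennes operator `-d²/dt² + (t-ξ)²`
(Neumann realization on `L²((0,∞))`). -/
def RQ (ξ : ℝ) (φ : ℝ → ℝ) : ℝ :=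
  (∫ t in Ioi (0:ℝ), ((deriv φ t) ^ 2 + (t - ξ) ^ 2 * (φ t) ^ 2)) /
  (∫ t in Ioi (0:ℝ), (φ t) ^ 2)

/-- The ground state energy `μ₁(ξ)` of the de Gennes operator. -/
def mu1 (ξ : ℝ) : ℝ :=
  sInf {r | ∃ φ, MemB1 φ ∧ (0 < ∫ t in Ioi (0:ℝ), (φ t) ^ 2) ∧ r = RQ ξ φ}

/-- `Θ₀ = inf_ξ μ₁(ξ)`. -/
def Theta0 : ℝ := sInf (Set.range mu1)

/-- The Ginzburg–Landau type functional `F_{z,λ}`. -/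
def GLF (z lam : ℝ) (φ : ℝ → ℝ) : ℝ :=
  ∫ t in Ioi (0:ℝ),
    ((deriv φ t) ^ 2 + (t - z) ^ 2 * (φ t) ^ 2 + lam / 2 * (φ t) ^ 4 - lam * (φ t) ^ 2)

/-- `f` minimizes `F_{z,λ}` over `B¹(ℝ⁺)`. -/
def IsMinimizer (z lam : ℝ) (f : ℝ → ℝ) : Prop :=
  MemB1 f ∧ ∀ φ, MemB1 φ → GLF z lam f ≤ GLF z lam φ

/-- `(ζ, f)` is a global minimum of the map `(z, φ) ↦ F_{z,λ}(φ)` on `ℝ × B¹(ℝ⁺)`. -/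
def IsGlobalMin (lam ζ : ℝ) (f : ℝ → ℝ) : Prop :=
  MemB1 f ∧ ∀ z : ℝ, ∀ φ, MemB1 φ → GLF ζ lam f ≤ GLF z lam φ

/-- The quadratic form of the de Gennes operator: the numerator of `RQ ξ φ`. -/
def quadForm (ξ : ℝ) (φ : ℝ → ℝ) : ℝ :=
  ∫ t in Ioi (0:ℝ), ((deriv φ t) ^ 2 + (t - ξ) ^ 2 * (φ t) ^ 2)

lemma quadForm_nonneg (ξ : ℝ) (φ : ℝ → ℝ) : 0 ≤ quadForm ξ φ :=
  integral_nonneg fun _ => by positivity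

namespace MemB1

variable {φ : ℝ → ℝ}

lemma continuousOn_Ici (h : MemB1 φ) : ContinuousOn φ (Ici 0) := by
  intro x hx
  rcases (mem_Ici.1 hx).eq_or_lt with rfl | hx
  · exact h.1
  · exact (h.2.1 x hx).continuousAt.continuousWithinAt

lemma aestronglyMeasurable (h : MemB1 φ) :
    AEStronglyMeasurable φ (volume.restrict (Ioi 0)) :=
  (h.continuousOn_Ici.mono Ioi_subset_Ici_self).aestronglyMeasurable measurableSet_Ioi

lemma memLp_two (h : MemB1 φ) : MemLp φ 2 (volume.restrict (Ioi 0)) :=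
  (memLp_two_iff_integrable_sq h.aestronglyMeasurable).2 h.2.2.1

lemma integrableOn_mul_deriv (h : MemB1 φ) :
    IntegrableOn (fun t => φ t * deriv φ t) (Ioi 0) :=
  h.memLp_two.integrable_mul
    ((memLp_two_iff_integrable_sq (measurable_deriv φ).aestronglyMeasurable).2 h.2.2.2.1)

lemma integrableOn_mul_sq (h : MemB1 φ) : IntegrableOn (fun t => t * φ t ^ 2) (Ioi 0) := by
  have hmul : MemLp (fun t => t * φ t) 2 (volume.restrict (Ioi 0)) :=
    (memLp_two_iff_integrable_sq (aestronglyMeasurable_id.mul h.aestronglyMeasurable)).2 h.2.2.2.2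
  exact (hmul.integrable_mul h.memLp_two).congr
    (ae_of_all _ fun t => by simp only [Pi.mul_apply]; ring)

lemma sq_le_sq_zero_add_integral_abs (h : MemB1 φ) {x : ℝ} (hx : 0 ≤ x) :
    φ x ^ 2 ≤ φ 0 ^ 2 + ∫ t in Ioi (0:ℝ), |2 * (φ t * deriv φ t)| := by
  have hint : IntegrableOn (fun t => 2 * (φ t * deriv φ t)) (Ioi 0) :=
    h.integrableOn_mul_deriv.const_mul 2
  have hderiv : ∀ t ∈ Ioo 0 x, HasDerivAt (fun t => φ t ^ 2) (2 * (φ t * deriv φ t)) t :=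
    fun t ht => by
      simpa [mul_comm, mul_assoc, mul_left_comm] using ((h.2.1 t ht.1).hasDerivAt).fun_pow 2
  have hftc : ∫ t in (0:ℝ)..x, 2 * (φ t * deriv φ t) = φ x ^ 2 - φ 0 ^ 2 :=
    intervalIntegral.integral_eq_sub_of_hasDerivAt_of_le hx
      ((h.continuousOn_Ici.mono Icc_subset_Ici_self).pow 2) hderiv
      ((intervalIntegrable_iff_integrableOn_Ioc_of_le hx).2 (hint.mono_set Ioc_subset_Ioi_self))
  have hbound : ∫ t in (0:ℝ)..x, 2 * (φ t * deriv φ t) ≤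
      ∫ t in Ioi (0:ℝ), |2 * (φ t * deriv φ t)| := by
    calc _ ≤ ∫ t in (0:ℝ)..x, |2 * (φ t * deriv φ t)| :=
          le_trans (le_abs_self _) (intervalIntegral.abs_integral_le_integral_abs hx)
      _ = ∫ t in Ioc 0 x, |2 * (φ t * deriv φ t)| := intervalIntegral.integral_of_le hx
      _ ≤ _ := setIntegral_mono_set hint.abs (ae_of_all _ fun _ => abs_nonneg _)
          Ioc_subset_Ioi_self.eventuallyLE
  linarith

lemma integrableOn_pow_four (h : MemB1 φ) : IntegrableOn (fun t => φ t ^ 4) (Ioi 0) := by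
  set M := φ 0 ^ 2 + ∫ t in Ioi (0:ℝ), |2 * (φ t * deriv φ t)|
  refine Integrable.mono' (h.2.2.1.const_mul M) (h.aestronglyMeasurable.pow 4) ?_
  rw [ae_restrict_iff' measurableSet_Ioi]
  refine ae_of_all _ fun t ht => ?_
  have hM : φ t ^ 2 ≤ M := h.sq_le_sq_zero_add_integral_abs (le_of_lt ht)
  rw [norm_of_nonneg (by positivity), show φ t ^ 4 = φ t ^ 2 * φ t ^ 2 by ring]
  exact mul_le_mul_of_nonneg_right hM (sq_nonneg _)

lemma const_mul (h : MemB1 φ) (c : ℝ) : MemB1 (fun t => c * φ t) := by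
  refine ⟨continuousWithinAt_const.mul h.1, fun t ht => (h.2.1 t ht).const_mul c,
    (h.2.2.1.const_mul (c ^ 2)).congr (ae_of_all _ fun t => by ring), ?_,
    (h.2.2.2.2.const_mul (c ^ 2)).congr (ae_of_all _ fun t => by ring)⟩
  refine (h.2.2.2.1.const_mul (c ^ 2)).congr ?_
  filter_upwards [ae_restrict_mem measurableSet_Ioi] with t ht
  rw [deriv_const_mul c (h.2.1 t ht)]
  ring

lemma integrableOn_quadForm (h : MemB1 φ) (ξ : ℝ) :
    IntegrableOn (fun t => deriv φ t ^ 2 + (t - ξ) ^ 2 * φ t ^ 2) (Ioi 0) := by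
  refine (h.2.2.2.1.fun_add ((h.2.2.2.2.fun_sub (h.integrableOn_mul_sq.const_mul (2 * ξ))).fun_add
    (h.2.2.1.const_mul (ξ ^ 2)))).congr (ae_of_all _ fun t => ?_)
  ring

lemma quadForm_eq (h : MemB1 φ) (ξ : ℝ) :
    quadForm ξ φ = quadForm 0 φ - 2 * ξ * (∫ t in Ioi (0:ℝ), t * φ t ^ 2)
      + ξ ^ 2 * ∫ t in Ioi (0:ℝ), φ t ^ 2 := by
  have hsplit : quadForm ξ φ = ∫ t in Ioi (0:ℝ),
      ((deriv φ t ^ 2 + (t - 0) ^ 2 * φ t ^ 2) - 2 * ξ * (t * φ t ^ 2) + ξ ^ 2 * φ t ^ 2) :=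
    integral_congr_ae (ae_of_all _ fun t => by ring)
  rw [hsplit, integral_add ((h.integrableOn_quadForm 0).fun_sub
      (h.integrableOn_mul_sq.const_mul _)) (h.2.2.1.const_mul _),
    integral_sub (h.integrableOn_quadForm 0) (h.integrableOn_mul_sq.const_mul _),
    integral_const_mul, integral_const_mul, quadForm]

lemma quadForm_const_mul (h : MemB1 φ) (c ξ : ℝ) :
    quadForm ξ (fun t => c * φ t) = c ^ 2 * quadForm ξ φ := by
  rw [quadForm, quadForm, ← integral_const_mul]
  refine setIntegral_congr_fun measurableSet_Ioi fun t ht => ?_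
  rw [deriv_const_mul c (h.2.1 t ht)]
  ring

lemma GLF_eq (h : MemB1 φ) (z lam : ℝ) :
    GLF z lam φ = quadForm z φ + lam / 2 * (∫ t in Ioi (0:ℝ), φ t ^ 4)
      - lam * ∫ t in Ioi (0:ℝ), φ t ^ 2 := by
  rw [GLF, quadForm, ← integral_const_mul, ← integral_const_mul,
    ← integral_add (h.integrableOn_quadForm z) (h.integrableOn_pow_four.const_mul _),
    ← integral_sub ((h.integrableOn_quadForm z).fun_add (h.integrableOn_pow_four.const_mul _))
      (h.2.2.1.const_mul _)]

lemma GLF_const_mul (h : MemB1 φ) (z lam c : ℝ) :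
    GLF z lam (fun t => c * φ t) = c ^ 2 * quadForm z φ
      + c ^ 4 * (lam / 2 * ∫ t in Ioi (0:ℝ), φ t ^ 4)
      - c ^ 2 * (lam * ∫ t in Ioi (0:ℝ), φ t ^ 2) := by
  simp only [(h.const_mul c).GLF_eq, h.quadForm_const_mul, mul_pow, integral_const_mul]
  ring

lemma mu1_mul_integral_sq_le (h : MemB1 φ) (ξ : ℝ) :
    mu1 ξ * (∫ t in Ioi (0:ℝ), φ t ^ 2) ≤ quadForm ξ φ := by
  rcases (integral_nonneg fun t => sq_nonneg (φ t) :
      (0:ℝ) ≤ ∫ t in Ioi (0:ℝ), φ t ^ 2).eq_or_lt with hN | hN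
  · rw [← hN, mul_zero]
    exact quadForm_nonneg ξ φ
  have hbdd : BddBelow {r | ∃ ψ, MemB1 ψ ∧ (0 < ∫ t in Ioi (0:ℝ), (ψ t) ^ 2) ∧ r = RQ ξ ψ} := by
    refine ⟨0, ?_⟩
    rintro r ⟨ψ, -, hψ, rfl⟩
    exact div_nonneg (quadForm_nonneg ξ ψ) hψ.le
  rw [← le_div_iff₀ hN]
  exact csInf_le hbdd ⟨φ, h, hN, rfl⟩

end MemB1

lemma setIntegral_pos_iff_of_support_inter_eq {α : Type*} [MeasurableSpace α] {μ : Measure α}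
    {s : Set α} {f g : α → ℝ} (hf : 0 ≤ᵐ[μ.restrict s] f) (hg : 0 ≤ᵐ[μ.restrict s] g)
    (hfi : IntegrableOn f s μ) (hgi : IntegrableOn g s μ)
    (hfg : Function.support f ∩ s = Function.support g ∩ s) :
    0 < ∫ x in s, f x ∂μ ↔ 0 < ∫ x in s, g x ∂μ := by
  rw [setIntegral_pos_iff_support_of_nonneg_ae hf hfi,
    setIntegral_pos_iff_support_of_nonneg_ae hg hgi, hfg]

lemma add_two_mul_eq_zero_of_forall_le {a b : ℝ}
    (h : ∀ s, 0 ≤ s → a + b ≤ s * a + s ^ 2 * b) : a + 2 * b = 0 := by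
  have hmin : IsLocalMin (fun s : ℝ => s * a + s ^ 2 * b) 1 :=
    Filter.mem_of_superset (Ici_mem_nhds zero_lt_one) fun s hs => by simpa using h s hs
  have hderiv : HasDerivAt (fun s : ℝ => s * a + s ^ 2 * b) (a + 2 * b) 1 := by
    simpa using ((hasDerivAt_id (1:ℝ)).mul_const a).fun_add ((hasDerivAt_pow 2 (1:ℝ)).mul_const b)
  exact hmin.hasDerivAt_eq_zero hderiv

lemma le_two_mul_sqrt_mul_of_forall_le {a b c : ℝ} (hb : 0 < b)
    (h : ∀ s, 0 ≤ s → s * a ≤ s ^ 2 * b + c) : a ≤ 2 * √(b * c) := by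
  rcases le_or_gt a 0 with ha | ha
  · exact ha.trans (by positivity)
  have hvertex := h (a / (2 * b)) (by positivity)
  have hdisc : (a / 2) ^ 2 ≤ b * c := by
    rw [div_pow, div_mul_eq_mul_div, mul_pow] at hvertex
    field_simp at hvertex
    nlinarith
  linarith [(le_sqrt' (by positivity)).2 hdisc]

lemma integrableOn_Ioi_max_sub_sq (c : ℝ) :
    IntegrableOn (fun t => max (c - t) 0 ^ 2) (Ioi 0) := by
  refine IntegrableOn.of_forall_sdiff_eq_zero (s := Ioc 0 c)
    (Continuous.integrableOn_Ioc (by fun_prop)) measurableSet_Ioi fun t ht => ?_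
  have : c < t := by simp at ht; exact ht.2
  simp [max_eq_right (by linarith : c - t ≤ 0)]

lemma setIntegral_Ioi_max_sub_sq {c : ℝ} (hc : 0 ≤ c) :
    ∫ t in Ioi (0:ℝ), max (c - t) 0 ^ 2 = c ^ 3 / 3 := by
  rw [setIntegral_eq_of_subset_of_forall_sdiff_eq_zero (s := Ioc 0 c) measurableSet_Ioi
      Ioc_subset_Ioi_self fun t ht => ?_]
  · rw [setIntegral_congr_fun measurableSet_Ioc
        (g := fun t => (c - t) ^ 2) fun t ht => by simp [max_eq_left (sub_nonneg.2 ht.2)],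
      ← intervalIntegral.integral_of_le hc, intervalIntegral.integral_comp_sub_left
        (fun x => x ^ 2) c]
    norm_num
  · have : c < t := by simp at ht; exact ht.2
    simp [max_eq_right (by linarith : c - t ≤ 0)]

lemma integral_sq_le_of_integral_mul_sq_eq {φ : ℝ → ℝ} {ζ : ℝ} (hζ : 0 < ζ)
    (h2 : IntegrableOn (fun t => φ t ^ 2) (Ioi 0))
    (h1 : IntegrableOn (fun t => t * φ t ^ 2) (Ioi 0))
    (h4 : IntegrableOn (fun t => φ t ^ 4) (Ioi 0))
    (hmom : ∫ t in Ioi (0:ℝ), t * φ t ^ 2 = ζ * ∫ t in Ioi (0:ℝ), φ t ^ 2) :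
    ∫ t in Ioi (0:ℝ), φ t ^ 2 ≤ 3 / 2 * √ζ * √(∫ t in Ioi (0:ℝ), φ t ^ 4) := by
  set c := 3 * ζ
  have hw : MemLp (fun t => max (c - t) 0) 2 (volume.restrict (Ioi 0)) :=
    (memLp_two_iff_integrable_sq (by fun_prop)).2 (integrableOn_Ioi_max_sub_sq c)
  have hφ2 : MemLp (fun t => φ t ^ 2) 2 (volume.restrict (Ioi 0)) :=
    (memLp_two_iff_integrable_sq h2.aestronglyMeasurable).2
      (h4.congr (ae_of_all _ fun t => by ring))
  have hholder := integral_mul_le_Lp_mul_Lq_of_nonneg HolderConjugate.two_two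
    (ae_of_all _ fun t => le_max_right (c - t) 0) (ae_of_all _ fun t => sq_nonneg (φ t))
    (by rwa [ENNReal.ofReal_ofNat]) (by rwa [ENNReal.ofReal_ofNat])
  simp only [rpow_two, ← pow_mul, ← sqrt_eq_rpow,
    setIntegral_Ioi_max_sub_sq (by positivity : 0 ≤ c)] at hholder
  have hcut : √(c ^ 3 / 3) = 3 * ζ * √ζ := by
    rw [show c ^ 3 / 3 = (3 * ζ) ^ 2 * ζ by ring, sqrt_mul (by positivity), sqrt_sq (by positivity)]
  have hmoment : 2 * ζ * ∫ t in Ioi (0:ℝ), φ t ^ 2 ≤ 3 * ζ * √ζ * √(∫ t in Ioi (0:ℝ), φ t ^ 4) :=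
    calc 2 * ζ * ∫ t in Ioi (0:ℝ), φ t ^ 2
        = ∫ t in Ioi (0:ℝ), (c * φ t ^ 2 - t * φ t ^ 2) := by
          rw [integral_sub (h2.const_mul c) h1, integral_const_mul, hmom]; ring
      _ ≤ ∫ t in Ioi (0:ℝ), max (c - t) 0 * φ t ^ 2 := by
          refine integral_mono (IntegrableOn.fun_sub (h2.const_mul c) h1)
            (hw.integrable_mul hφ2) fun t => ?_
          rw [← sub_mul]
          exact mul_le_mul_of_nonneg_right (le_max_left _ _) (sq_nonneg _)
      _ ≤ _ := hcut ▸ hholder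
  nlinarith

lemma MemB1.integral_pow_four_pos {φ : ℝ → ℝ} (h : MemB1 φ)
    (hN : 0 < ∫ t in Ioi (0:ℝ), φ t ^ 2) : 0 < ∫ t in Ioi (0:ℝ), φ t ^ 4 :=
  (setIntegral_pos_iff_of_support_inter_eq (ae_of_all _ fun t => by positivity)
    (ae_of_all _ fun t => by positivity) h.integrableOn_pow_four h.2.2.1 (by ext t; simp)).2 hN

namespace IsMinimizer

variable {z lam : ℝ} {f : ℝ → ℝ}

/-- Stationarity of `s ↦ F_{z,λ}(√s f)` at `s = 1`. -/
lemma quadForm_eq (h : IsMinimizer z lam f) :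
    quadForm z f = lam * (∫ t in Ioi (0:ℝ), f t ^ 2) - lam * ∫ t in Ioi (0:ℝ), f t ^ 4 := by
  have hstat := add_two_mul_eq_zero_of_forall_le
    (a := quadForm z f - lam * ∫ t in Ioi (0:ℝ), f t ^ 2)
    (b := lam / 2 * ∫ t in Ioi (0:ℝ), f t ^ 4) fun s hs => by
      have hscaled := h.2 _ (h.1.const_mul √s)
      rw [h.1.GLF_eq, h.1.GLF_const_mul, show √s ^ 4 = (√s ^ 2) ^ 2 by ring, sq_sqrt hs]
        at hscaled
      linarith
  linarith

lemma GLF_eq (h : IsMinimizer z lam f) :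
    GLF z lam f = -(lam / 2 * ∫ t in Ioi (0:ℝ), f t ^ 4) := by
  rw [h.1.GLF_eq, h.quadForm_eq]
  ring

end IsMinimizer

namespace IsGlobalMin

variable {lam ζ : ℝ} {f : ℝ → ℝ}

lemma isMinimizer (h : IsGlobalMin lam ζ f) : IsMinimizer ζ lam f :=
  ⟨h.1, fun φ hφ => h.2 ζ φ hφ⟩

/-- Stationarity of `z ↦ F_{z,λ}(f)` at `z = ζ`. -/
lemma integral_mul_sq_eq (h : IsGlobalMin lam ζ f) :
    ∫ t in Ioi (0:ℝ), t * f t ^ 2 = ζ * ∫ t in Ioi (0:ℝ), f t ^ 2 := by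
  set M := ∫ t in Ioi (0:ℝ), t * f t ^ 2
  set N := ∫ t in Ioi (0:ℝ), f t ^ 2
  have hGLF : (fun z => GLF z lam f) = fun z =>
      (quadForm 0 f + lam / 2 * (∫ t in Ioi (0:ℝ), f t ^ 4) - lam * N) - 2 * M * z + z ^ 2 * N := by
    ext z
    rw [h.1.GLF_eq, h.1.quadForm_eq]
    ring
  have hmin : IsLocalMin (fun z => GLF z lam f) ζ :=
    Filter.Eventually.of_forall fun z => h.2 z f h.1
  have hderiv : HasDerivAt (fun z => GLF z lam f) (-(2 * M) + 2 * ζ * N) ζ := by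
    rw [hGLF]
    simpa using ((hasDerivAt_id ζ).const_mul (2 * M)).const_sub _ |>.fun_add
      ((hasDerivAt_pow 2 ζ).mul_const N)
  linarith [hmin.hasDerivAt_eq_zero hderiv]

/-- Comparison with the test functions `√s · u`, `s ≥ 0`. -/
lemma sub_quadForm_div_sqrt_le (h : IsGlobalMin lam ζ f) (hlam : 0 < lam) (ξ : ℝ)
    {u : ℝ → ℝ} (hu : MemB1 u) (hnorm : ∫ t in Ioi (0:ℝ), u t ^ 2 = 1) :
    (lam - quadForm ξ u) / √(∫ t in Ioi (0:ℝ), u t ^ 4) ≤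
      lam * √(∫ t in Ioi (0:ℝ), f t ^ 4) := by
  set P := ∫ t in Ioi (0:ℝ), f t ^ 4
  set Q := ∫ t in Ioi (0:ℝ), u t ^ 4
  have hQ : 0 < Q := hu.integral_pow_four_pos (hnorm ▸ one_pos)
  have hdisc : lam - quadForm ξ u ≤ 2 * √(lam / 2 * Q * (lam / 2 * P)) :=
    le_two_mul_sqrt_mul_of_forall_le (by positivity) fun s hs => by
      have htest := h.2 ξ _ (hu.const_mul √s)
      rw [h.isMinimizer.GLF_eq, hu.GLF_const_mul, hnorm,
        show √s ^ 4 = (√s ^ 2) ^ 2 by ring, sq_sqrt hs] at htest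
      linarith
  rw [div_le_iff₀ (sqrt_pos.2 hQ)]
  calc lam - quadForm ξ u ≤ 2 * √(lam / 2 * Q * (lam / 2 * P)) := hdisc
    _ = lam * √P * √Q := by
      rw [show lam / 2 * Q * (lam / 2 * P) = (lam / 2) ^ 2 * (Q * P) by ring,
        sqrt_mul (by positivity), sqrt_mul hQ.le, sqrt_sq (by positivity)]
      ring

lemma mul_sqrt_integral_pow_four_le (h : IsGlobalMin lam ζ f) (hlam : 0 < lam)
    (hP : 0 < ∫ t in Ioi (0:ℝ), f t ^ 4) :
    lam * √(∫ t in Ioi (0:ℝ), f t ^ 4) ≤ 3 / 2 * √ζ * (lam - mu1 ζ) := by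
  set N := ∫ t in Ioi (0:ℝ), f t ^ 2
  set P := ∫ t in Ioi (0:ℝ), f t ^ 4
  have hEL := h.isMinimizer.quadForm_eq
  have hmu := h.1.mu1_mul_integral_sq_le ζ
  have hN : 0 < N := by nlinarith [quadForm_nonneg ζ f]
  have hζ : 0 < ζ := by
    have hM : 0 < ∫ t in Ioi (0:ℝ), t * f t ^ 2 := by
      refine (setIntegral_pos_iff_of_support_inter_eq
        (ae_restrict_of_forall_mem measurableSet_Ioi fun t (ht : 0 < t) => by positivity)
        (ae_of_all _ fun t => by positivity) h.1.integrableOn_mul_sq h.1.2.2.1 ?_).2 hN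
      ext t
      simp +contextual [ne_of_gt]
    rw [h.integral_mul_sq_eq] at hM
    exact pos_of_mul_pos_left hM hN.le
  have hNle := integral_sq_le_of_integral_mul_sq_eq hζ h.1.2.2.1 h.1.integrableOn_mul_sq
    h.1.integrableOn_pow_four h.integral_mul_sq_eq
  have hgap : 0 < lam - mu1 ζ := pos_of_mul_pos_left (by nlinarith) hN.le
  refine le_of_mul_le_mul_right ?_ (sqrt_pos.2 hP)
  calc lam * √P * √P = lam * P := by rw [mul_assoc, mul_self_sqrt hP.le]
    _ ≤ (lam - mu1 ζ) * N := by linarith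
    _ ≤ (lam - mu1 ζ) * (3 / 2 * √ζ * √P) := mul_le_mul_of_nonneg_left hNle hgap.le
    _ = 3 / 2 * √ζ * (lam - mu1 ζ) * √P := by ring

end IsGlobalMin

theorem L4_norm_bounds_general (lam ζ : ℝ) (f : ℝ → ℝ)
    (hlam0 : Theta0 < lam)
    (hmin : IsGlobalMin lam ζ f)
    (ξ₀ : ℝ)
    (u₁ : ℝ → ℝ) (hu₁ : MemB1 u₁)
    (hu₁norm : (∫ t in Ioi (0:ℝ), (u₁ t) ^ 2) = 1)
    (hu₁gs : RQ ξ₀ u₁ = Theta0) :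
    (lam - Theta0) / (∫ t in Ioi (0:ℝ), (u₁ t) ^ 4) ^ ((1:ℝ)/2) ≤
      lam * (∫ t in Ioi (0:ℝ), (f t) ^ 4) ^ ((1:ℝ)/2) ∧
    lam * (∫ t in Ioi (0:ℝ), (f t) ^ 4) ^ ((1:ℝ)/2) ≤
      3 / 2 * ζ ^ ((1:ℝ)/2) * (lam - mu1 ζ) := by
  simp only [← sqrt_eq_rpow]
  have hΘ : quadForm ξ₀ u₁ = Theta0 := by rw [← hu₁gs, RQ, hu₁norm, div_one, quadForm]
  have hlam : 0 < lam := (hΘ ▸ quadForm_nonneg ξ₀ u₁).trans_lt hlam0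
  have hlow := hmin.sub_quadForm_div_sqrt_le hlam ξ₀ hu₁ hu₁norm
  rw [hΘ] at hlow
  have hP : 0 < ∫ t in Ioi (0:ℝ), f t ^ 4 := by
    have hpos := (div_pos (sub_pos.2 hlam0)
      (sqrt_pos.2 (hu₁.integral_pow_four_pos (hu₁norm ▸ one_pos)))).trans_le hlow
    exact sqrt_pos.1 (pos_of_mul_pos_right hpos hlam.le)
  exact ⟨hlow, hmin.mul_sqrt_integral_pow_four_le hlam hP⟩

/-- bounds on `λ‖f‖₄²` at a global minimum `(ζ, f)` of
`(z,φ) ↦ F_{z,λ}(φ)` with `Θ₀ < λ ≤ 1`. Here `ξ₀` is the point where `μ₁`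
attains its minimum `Θ₀`, `u₁` the corresponding normalized nonnegative ground
state, and `‖g‖₄² = (∫ g⁴)^{1/2}`. -/
theorem L4_norm_bounds (lam ζ : ℝ) (f : ℝ → ℝ)
    (hlam0 : Theta0 < lam) (hlam1 : lam ≤ 1)
    (hmin : IsGlobalMin lam ζ f) (hfpos : ∀ t : ℝ, 0 ≤ t → 0 ≤ f t)
    (ξ₀ : ℝ) (hξ₀ : 0 < ξ₀) (hξ₀min : mu1 ξ₀ = Theta0)
    (u₁ : ℝ → ℝ) (hu₁ : MemB1 u₁) (hu₁pos : ∀ t : ℝ, 0 ≤ t → 0 ≤ u₁ t)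
    (hu₁norm : (∫ t in Ioi (0:ℝ), (u₁ t) ^ 2) = 1)
    (hu₁gs : RQ ξ₀ u₁ = Theta0) :
    (lam - Theta0) / (∫ t in Ioi (0:ℝ), (u₁ t) ^ 4) ^ ((1:ℝ)/2) ≤
      lam * (∫ t in Ioi (0:ℝ), (f t) ^ 4) ^ ((1:ℝ)/2) ∧
    lam * (∫ t in Ioi (0:ℝ), (f t) ^ 4) ^ ((1:ℝ)/2) ≤
      3 / 2 * ζ ^ ((1:ℝ)/2) * (lam - mu1 ζ) :=
  L4_norm_bounds_general lam ζ f hlam0 hmin ξ₀ u₁ hu₁ hu₁norm hu₁gs
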